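/- Let −1 < p < 0. Let η : ℝ → ℝ³ and η_m : ℝ → ℝ³ (m ∈ ℕ) be continuous 1-periodic maps such that η_m → η uniformly, η is injective on [0, 1), and there exist constants c > 0 and δ ∈ (0, 1/2] such that ‖η_m(u) − η_m(v)‖ ≥ c · d₁(u, v) for all m and all u, v with d₁(u, v) ≤ δ. Then ∫₀^1 ∫₀^1 ‖η_m(u) − η_m(v)‖^p du dv → ∫₀^1 ∫₀^1 ‖η(u) − η(v)‖^p du dv as m → ∞, and both sides are finite. -/

import Mathlib

open MeasureTheory Filter Topology

/-- Circular distance on the parameter circle of circumference `L`: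
`d_L(s, t) = min_{k ∈ ℤ} |s - t + k L|`. -/
noncomputable def circDist (L s t : ℝ) : ℝ := ⨅ k : ℤ, |s - t + k * L|

/-!
A chord–arc bound `c |u - v| ≤ ‖f u - f v‖` at parameter scales `|u - v| ≤ δ` controls
`∫₀¹ ‖x - f v‖ ^ q dv` uniformly in the point `x`, for every `q ∈ (-1, 0]`: on a parameter
interval of length `δ`, if `f w` is the point of the arc nearest to `x`, then
`‖x - f v‖ ≥ ‖f v - f w‖ / 2 ≥ c |v - w| / 2`. Taking an exponent `q ∈ (-1, p)`, this bounds the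
kernels `‖η_m u - η_m v‖ ^ p` in `L^(q/p)` of the unit square uniformly in `m`, so they are
uniformly integrable. Injectivity of `η` on `[0, 1)` gives `η u ≠ η v` off a null set, and there
the kernels converge pointwise. Vitali's convergence theorem concludes.
-/

open Set
open scoped ENNReal

lemma circDist_one_eq_abs {u v : ℝ} (h : |u - v| ≤ 1 / 2) : circDist 1 u v = |u - v| := by
  have hbdd : BddBelow (range fun k : ℤ => |u - v + k * 1|) :=
    ⟨0, by rintro _ ⟨k, rfl⟩; positivity⟩
  refine le_antisymm ((ciInf_le hbdd 0).trans (by simp)) (le_ciInf fun k => ?_)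
  rcases eq_or_ne k 0 with rfl | hk
  · simp
  · have hk1 : (1 : ℝ) ≤ |(k : ℝ)| := by exact_mod_cast Int.one_le_abs hk
    have : |(k : ℝ)| ≤ |u - v + k * 1| + |u - v| := by
      simpa using abs_sub (u - v + k * 1) (u - v)
    linarith

theorem unifIntegrable_of_lintegral_enorm_rpow_le {ι α β : Type*} [MeasurableSpace α]
    {μ : Measure α} [NormedAddCommGroup β] {f : ι → α → β} {r : ℝ} (hr : 1 < r)
    (hf : ∀ i, AEStronglyMeasurable (f i) μ) {B : ℝ≥0∞} (hB : B ≠ ∞)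
    (hbound : ∀ i, ∫⁻ x, ‖f i x‖ₑ ^ r ∂μ ≤ B) : UnifIntegrable f 1 μ := by
  refine unifIntegrable_of le_rfl ENNReal.one_ne_top hf fun ε hε => ?_
  have hlim : Tendsto (fun C : ℝ => C ^ (-(r - 1)) * B.toReal) atTop (𝓝 0) := by
    simpa using (tendsto_rpow_neg_atTop (by linarith : 0 < r - 1)).mul_const B.toReal
  obtain ⟨C, hCε, hC⟩ := ((hlim.eventually (gt_mem_nhds hε)).and (eventually_gt_atTop 0)).exists
  -- Markov-type truncation: where `C ≤ ‖f i x‖`, `‖f i x‖ ≤ C ^ (1 - r) * ‖f i x‖ ^ r`.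
  have hpt : ∀ i x, ‖{x | C.toNNReal ≤ ‖f i x‖₊}.indicator (f i) x‖ₑ ≤
      ENNReal.ofReal (C ^ (-(r - 1))) * ‖f i x‖ₑ ^ r := by
    intro i x
    by_cases hx : C.toNNReal ≤ ‖f i x‖₊
    · have hCx : C ≤ ‖f i x‖ := by simpa [Real.toNNReal_le_iff_le_coe] using hx
      have hx0 : 0 < ‖f i x‖ := hC.trans_le hCx
      rw [indicator_of_mem (show x ∈ {x | C.toNNReal ≤ ‖f i x‖₊} from hx), ← ofReal_norm,
        ENNReal.ofReal_rpow_of_nonneg (norm_nonneg _) (by linarith),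
        ← ENNReal.ofReal_mul (by positivity)]
      refine ENNReal.ofReal_le_ofReal ?_
      calc ‖f i x‖ = ‖f i x‖ ^ (-(r - 1)) * ‖f i x‖ ^ r := by
            rw [← Real.rpow_add hx0]; norm_num
        _ ≤ C ^ (-(r - 1)) * ‖f i x‖ ^ r := by
            gcongr ?_ * _
            exact Real.rpow_le_rpow_of_nonpos hC hCx (by linarith)
    · simp [indicator_of_notMem (show x ∉ {x | C.toNNReal ≤ ‖f i x‖₊} from hx)]
  refine ⟨C.toNNReal, fun i => ?_⟩
  rw [eLpNorm_one_eq_lintegral_enorm]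
  calc ∫⁻ x, ‖{x | C.toNNReal ≤ ‖f i x‖₊}.indicator (f i) x‖ₑ ∂μ
      ≤ ∫⁻ x, ENNReal.ofReal (C ^ (-(r - 1))) * ‖f i x‖ₑ ^ r ∂μ := lintegral_mono (hpt i)
    _ = ENNReal.ofReal (C ^ (-(r - 1))) * ∫⁻ x, ‖f i x‖ₑ ^ r ∂μ :=
        lintegral_const_mul' _ _ ENNReal.ofReal_ne_top
    _ ≤ ENNReal.ofReal (C ^ (-(r - 1))) * B := by gcongr; exact hbound i
    _ = ENNReal.ofReal (C ^ (-(r - 1)) * B.toReal) := by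
        rw [ENNReal.ofReal_mul (by positivity), ENNReal.ofReal_toReal hB]
    _ ≤ ENNReal.ofReal ε := ENNReal.ofReal_le_ofReal hCε.le

lemma setLIntegral_Icc_abs_sub_rpow_le (q : ℝ) {a b w : ℝ} (hw : w ∈ Icc a b) :
    ∫⁻ v in Icc a b, ENNReal.ofReal (|v - w| ^ q) ≤
      ∫⁻ t in Icc (a - b) (b - a), ENNReal.ofReal (|t| ^ q) := by
  have hsub : Icc a b ⊆ (· - w) ⁻¹' Icc (a - b) (b - a) := fun v hv =>
    ⟨by linarith [hv.1, hw.2], by linarith [hv.2, hw.1]⟩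
  calc ∫⁻ v in Icc a b, ENNReal.ofReal (|v - w| ^ q)
      ≤ ∫⁻ v in (· - w) ⁻¹' Icc (a - b) (b - a), ENNReal.ofReal (|v - w| ^ q) :=
        lintegral_mono_set hsub
    _ = _ := (measurePreserving_sub_right volume w).setLIntegral_comp_preimage measurableSet_Icc
        (by fun_prop : Measurable fun t : ℝ => ENNReal.ofReal (|t| ^ q))

lemma setLIntegral_Icc_abs_rpow_ne_top {q : ℝ} (hq : -1 < q) (a b : ℝ) :
    ∫⁻ t in Icc a b, ENNReal.ofReal (|t| ^ q) ≠ ∞ := by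
  have hloc : LocallyIntegrable (fun t : ℝ => |t| ^ q) volume :=
    locallyIntegrable_of_norm_le_rpow (C := 1) (α := -q) (by simp) (by simp; linarith)
      (ae_of_all _ fun t => by simp [abs_nonneg, Real.abs_rpow_of_nonneg])
      (continuous_abs.measurable.pow_const q).aestronglyMeasurable
  exact ((hloc.integrableOn_isCompact isCompact_Icc).lintegral_lt_top).ne

lemma Icc_zero_one_subset_iUnion_Icc {δ : ℝ} (hδ : 0 < δ) :
    Icc (0 : ℝ) 1 ⊆ ⋃ j : Fin (⌈1 / δ⌉₊ + 1), Icc (j * δ) (j * δ + δ) := by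
  intro v hv
  have hv0 : 0 ≤ v / δ := div_nonneg hv.1 hδ.le
  have hj : ⌊v / δ⌋₊ < ⌈1 / δ⌉₊ + 1 := Nat.lt_succ_of_le <|
    (Nat.floor_le_floor (div_le_div_of_nonneg_right hv.2 hδ.le)).trans (Nat.floor_le_ceil _)
  refine mem_iUnion.2 ⟨⟨_, hj⟩, ?_, ?_⟩
  · simpa [le_div_iff₀ hδ] using Nat.floor_le hv0
  · have := Nat.lt_floor_add_one (v / δ)
    rw [div_lt_iff₀ hδ] at this
    linarith

noncomputable def chordRpowBound (q c δ : ℝ) : ℝ≥0∞ :=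
  (⌈1 / δ⌉₊ + 1) * (ENNReal.ofReal ((c / 2) ^ q) * ∫⁻ t in Icc (-δ) δ, ENNReal.ofReal (|t| ^ q))

lemma chordRpowBound_ne_top {q : ℝ} (hq : -1 < q) (c δ : ℝ) : chordRpowBound q c δ ≠ ∞ :=
  ENNReal.mul_ne_top (by simp) <|
    ENNReal.mul_ne_top ENNReal.ofReal_ne_top (setLIntegral_Icc_abs_rpow_ne_top hq _ _)

lemma volume_restrict_unitSquare :
    (volume : Measure (ℝ × ℝ)).restrict (Icc 0 1 ×ˢ Icc 0 1) =
      (volume.restrict (Icc 0 1)).prod (volume.restrict (Icc 0 1)) := by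
  rw [Measure.prod_restrict, ← Measure.volume_eq_prod]

section ChordArc

variable {E : Type*} [NormedAddCommGroup E] {f : ℝ → E} {c δ : ℝ}

lemma setLIntegral_Icc_norm_sub_rpow_le {q a b : ℝ} (hq : q ≤ 0) (hc : 0 < c)
    (hab : a ≤ b) (hf : ContinuousOn f (Icc a b))
    (hca : ∀ u ∈ Icc a b, ∀ v ∈ Icc a b, c * |u - v| ≤ ‖f u - f v‖) (x : E) :
    ∫⁻ v in Icc a b, ENNReal.ofReal (‖x - f v‖ ^ q) ≤
      ENNReal.ofReal ((c / 2) ^ q) * ∫⁻ t in Icc (a - b) (b - a), ENNReal.ofReal (|t| ^ q) := by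
  obtain ⟨w, hw, hmin⟩ :=
    isCompact_Icc.exists_isMinOn (nonempty_Icc.2 hab) (continuousOn_const.sub hf).norm
  -- `f w` is the point of the arc nearest to `x`, so `‖f v - f w‖ ≤ 2 ‖x - f v‖`.
  have hpt : ∀ v ∈ Icc a b, v ≠ w → ENNReal.ofReal (‖x - f v‖ ^ q) ≤
      ENNReal.ofReal ((c / 2) ^ q) * ENNReal.ofReal (|v - w| ^ q) := by
    intro v hv hvw
    have hvw : 0 < |v - w| := abs_pos.2 (sub_ne_zero.2 hvw)
    have hnear : ‖x - f w‖ ≤ ‖x - f v‖ := hmin hv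
    have htri : ‖f v - f w‖ ≤ ‖x - f w‖ + ‖x - f v‖ := by
      simpa using norm_sub_le (x - f w) (x - f v)
    rw [← ENNReal.ofReal_mul (by positivity), ← Real.mul_rpow (by positivity) hvw.le]
    refine ENNReal.ofReal_le_ofReal (Real.rpow_le_rpow_of_nonpos (by positivity) ?_ hq)
    linarith [hca v hv w hw]
  calc ∫⁻ v in Icc a b, ENNReal.ofReal (‖x - f v‖ ^ q)
      ≤ ∫⁻ v in Icc a b, ENNReal.ofReal ((c / 2) ^ q) * ENNReal.ofReal (|v - w| ^ q) := by
        refine lintegral_mono_ae ?_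
        filter_upwards [ae_restrict_mem measurableSet_Icc,
          ae_restrict_of_ae (Measure.ae_ne volume w)] with v hv hvw using hpt v hv hvw
    _ = ENNReal.ofReal ((c / 2) ^ q) * ∫⁻ v in Icc a b, ENNReal.ofReal (|v - w| ^ q) :=
        lintegral_const_mul' _ _ ENNReal.ofReal_ne_top
    _ ≤ _ := by gcongr _ * ?_; exact setLIntegral_Icc_abs_sub_rpow_le q hw

lemma setLIntegral_Icc_zero_one_norm_sub_rpow_le {q : ℝ} (hq : q ≤ 0) (hc : 0 < c) (hδ : 0 < δ)
    (hf : Continuous f) (hca : ∀ u v, |u - v| ≤ δ → c * |u - v| ≤ ‖f u - f v‖) (x : E) :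
    ∫⁻ v in Icc 0 1, ENNReal.ofReal (‖x - f v‖ ^ q) ≤ chordRpowBound q c δ := by
  have hcell : ∀ j : Fin (⌈1 / δ⌉₊ + 1),
      ∫⁻ v in Icc (j * δ) (j * δ + δ), ENNReal.ofReal (‖x - f v‖ ^ q) ≤
        ENNReal.ofReal ((c / 2) ^ q) * ∫⁻ t in Icc (-δ) δ, ENNReal.ofReal (|t| ^ q) := by
    intro j
    have hca' : ∀ u ∈ Icc (j * δ) (j * δ + δ), ∀ v ∈ Icc (j * δ) (j * δ + δ),
        c * |u - v| ≤ ‖f u - f v‖ := fun u hu v hv =>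
      hca u v (abs_sub_le_iff.2 ⟨by linarith [hu.2, hv.1], by linarith [hu.1, hv.2]⟩)
    simpa using setLIntegral_Icc_norm_sub_rpow_le hq hc (by linarith) hf.continuousOn hca' x
  calc ∫⁻ v in Icc 0 1, ENNReal.ofReal (‖x - f v‖ ^ q)
      ≤ ∫⁻ v in ⋃ j : Fin (⌈1 / δ⌉₊ + 1), Icc (j * δ) (j * δ + δ),
          ENNReal.ofReal (‖x - f v‖ ^ q) := lintegral_mono_set (Icc_zero_one_subset_iUnion_Icc hδ)
    _ ≤ ∑ j : Fin (⌈1 / δ⌉₊ + 1),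
          ∫⁻ v in Icc (j * δ) (j * δ + δ), ENNReal.ofReal (‖x - f v‖ ^ q) :=
        (lintegral_iUnion_le _ _).trans_eq (tsum_fintype _)
    _ ≤ chordRpowBound q c δ := by
        refine (Finset.sum_le_sum fun j _ => hcell j).trans_eq ?_
        simp [chordRpowBound]

lemma measurable_norm_sub_rpow (hf : Continuous f) (q : ℝ) :
    Measurable fun z : ℝ × ℝ => ‖f z.1 - f z.2‖ ^ q :=
  ((hf.comp continuous_fst).sub (hf.comp continuous_snd)).norm.measurable.pow_const q

lemma setLIntegral_unitSquare_norm_sub_rpow_le {q : ℝ} (hq : q ≤ 0) (hc : 0 < c) (hδ : 0 < δ)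
    (hf : Continuous f) (hca : ∀ u v, |u - v| ≤ δ → c * |u - v| ≤ ‖f u - f v‖) :
    ∫⁻ z in Icc 0 1 ×ˢ Icc 0 1, ENNReal.ofReal (‖f z.1 - f z.2‖ ^ q) ≤ chordRpowBound q c δ := by
  rw [volume_restrict_unitSquare,
    lintegral_prod _ (measurable_norm_sub_rpow hf q).ennreal_ofReal.aemeasurable]
  calc ∫⁻ u in Icc 0 1, ∫⁻ v in Icc 0 1, ENNReal.ofReal (‖f u - f v‖ ^ q)
      ≤ ∫⁻ _ in Icc (0 : ℝ) 1, chordRpowBound q c δ :=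
        lintegral_mono fun u => setLIntegral_Icc_zero_one_norm_sub_rpow_le hq hc hδ hf hca (f u)
    _ = chordRpowBound q c δ := by simp

lemma setLIntegral_unitSquare_enorm_norm_sub_rpow_rpow_le {q : ℝ} (hq : q ≤ 0) {r : ℝ} (hr : 0 ≤ r)
    (hc : 0 < c) (hδ : 0 < δ) (hf : Continuous f)
    (hca : ∀ u v, |u - v| ≤ δ → c * |u - v| ≤ ‖f u - f v‖) :
    ∫⁻ z in Icc 0 1 ×ˢ Icc 0 1, ‖‖f z.1 - f z.2‖ ^ q‖ₑ ^ r ≤ chordRpowBound (q * r) c δ := by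
  have h : ∀ z : ℝ × ℝ,
      ‖‖f z.1 - f z.2‖ ^ q‖ₑ ^ r = ENNReal.ofReal (‖f z.1 - f z.2‖ ^ (q * r)) := fun z => by
    rw [Real.enorm_eq_ofReal (by positivity), ENNReal.ofReal_rpow_of_nonneg (by positivity) hr,
      ← Real.rpow_mul (norm_nonneg _)]
  simpa only [h] using
    setLIntegral_unitSquare_norm_sub_rpow_le (by nlinarith) hc hδ hf hca

lemma integrableOn_unitSquare_norm_sub_rpow {q : ℝ} (hq₁ : -1 < q) (hq₀ : q ≤ 0) (hc : 0 < c)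
    (hδ : 0 < δ) (hf : Continuous f) (hca : ∀ u v, |u - v| ≤ δ → c * |u - v| ≤ ‖f u - f v‖) :
    IntegrableOn (fun z : ℝ × ℝ => ‖f z.1 - f z.2‖ ^ q) (Icc 0 1 ×ˢ Icc 0 1) := by
  refine ⟨(measurable_norm_sub_rpow hf q).aestronglyMeasurable, ?_⟩
  rw [hasFiniteIntegral_iff_ofReal (ae_of_all _ fun z => by positivity)]
  exact ((setLIntegral_unitSquare_norm_sub_rpow_le hq₀ hc hδ hf hca).trans_lt
    (chordRpowBound_ne_top hq₁ c δ).lt_top)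

end ChordArc

lemma setIntegral_Icc_prod_Icc_eq_intervalIntegral {E : Type*} [NormedAddCommGroup E]
    [NormedSpace ℝ E] {F : ℝ × ℝ → E} {a b c d : ℝ} (hab : a ≤ b) (hcd : c ≤ d)
    (hF : IntegrableOn F (Icc a b ×ˢ Icc c d)) :
    ∫ z in Icc a b ×ˢ Icc c d, F z = ∫ u in a..b, ∫ v in c..d, F (u, v) := by
  rw [Measure.volume_eq_prod] at hF ⊢
  simp only [setIntegral_prod F hF, intervalIntegral.integral_of_le hab,
    intervalIntegral.integral_of_le hcd, integral_Icc_eq_integral_Ioc]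

lemma ae_unitSquare_ne_of_injOn {E : Type*} {f : ℝ → E} (hf : InjOn f (Ico 0 1)) :
    ∀ᵐ z ∂(volume : Measure (ℝ × ℝ)).restrict (Icc 0 1 ×ˢ Icc 0 1), f z.1 ≠ f z.2 := by
  have hsq : (volume : Measure (ℝ × ℝ)).restrict (Icc 0 1 ×ˢ Icc 0 1) =
      volume.restrict (Ico 0 1 ×ˢ Ico 0 1) :=
    Measure.restrict_congr_set (Measure.set_prod_ae_eq Ico_ae_eq_Icc Ico_ae_eq_Icc).symm
  have hdiag : ∀ᵐ z : ℝ × ℝ, z.1 ≠ z.2 := by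
    rw [Measure.volume_eq_prod, Measure.ae_prod_iff_ae_ae (by measurability)]
    exact ae_of_all _ fun u => (Measure.ae_ne volume u).mono fun v h => h.symm
  rw [hsq]
  filter_upwards [ae_restrict_mem (measurableSet_Ico.prod measurableSet_Ico),
    ae_restrict_of_ae hdiag] with z hz hne
  exact fun h => hne (hf hz.1 hz.2 h)

lemma ae_tendsto_norm_sub_rpow_of_injOn {E ι : Type*} [NormedAddCommGroup E] {l : Filter ι}
    {f : ι → ℝ → E} {g : ℝ → E} (hfg : ∀ u, Tendsto (fun i => f i u) l (𝓝 (g u)))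
    (hg : InjOn g (Ico 0 1)) (p : ℝ) :
    ∀ᵐ z ∂(volume : Measure (ℝ × ℝ)).restrict (Icc 0 1 ×ˢ Icc 0 1),
      Tendsto (fun i => ‖f i z.1 - f i z.2‖ ^ p) l (𝓝 (‖g z.1 - g z.2‖ ^ p)) :=
  (ae_unitSquare_ne_of_injOn hg).mono fun z hz =>
    ((hfg z.1).sub (hfg z.2)).norm.rpow_const (Or.inl (norm_ne_zero_iff.2 (sub_ne_zero.2 hz)))

lemma unifIntegrable_unitSquare_norm_sub_rpow {E ι : Type*} [NormedAddCommGroup E]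
    {f : ι → ℝ → E} {p c δ : ℝ} (hp : p ∈ Ioo (-1) 0) (hc : 0 < c) (hδ : 0 < δ)
    (hf : ∀ i, Continuous (f i)) (hca : ∀ i u v, |u - v| ≤ δ → c * |u - v| ≤ ‖f i u - f i v‖) :
    UnifIntegrable (fun i (z : ℝ × ℝ) => ‖f i z.1 - f i z.2‖ ^ p) 1
      (volume.restrict (Icc 0 1 ×ˢ Icc 0 1)) := by
  obtain ⟨q, hq₁, hqp⟩ := exists_between hp.1
  have hr : 1 < q / p := (one_lt_div_of_neg hp.2).2 hqp
  have hpq : p * (q / p) = q := mul_div_cancel₀ q hp.2.ne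
  exact unifIntegrable_of_lintegral_enorm_rpow_le hr
    (fun i => (measurable_norm_sub_rpow (hf i) p).aestronglyMeasurable)
    (chordRpowBound_ne_top hq₁ c δ) fun i =>
      (setLIntegral_unitSquare_enorm_norm_sub_rpow_rpow_le hp.2.le (by linarith) hc hδ (hf i)
        (hca i)).trans_eq (by rw [hpq])

theorem negative_power_chord_integral_continuity_general
    (p : ℝ) (hp : p ∈ Set.Ioo (-1 : ℝ) 0)
    (η : ℝ → EuclideanSpace ℝ (Fin 3)) (ηm : ℕ → ℝ → EuclideanSpace ℝ (Fin 3))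
    (hη : Continuous η) (hηm : ∀ m, Continuous (ηm m))
    (hconv : TendstoUniformly ηm η atTop)
    (hinj : Set.InjOn η (Set.Ico 0 1))
    (c δ : ℝ) (hc : 0 < c) (hδ : δ ∈ Set.Ioc (0:ℝ) (1/2))
    (hchordarc : ∀ m, ∀ u v : ℝ, circDist 1 u v ≤ δ →
      c * circDist 1 u v ≤ ‖ηm m u - ηm m v‖) :
    (∀ m, IntegrableOn (fun q : ℝ × ℝ => ‖ηm m q.1 - ηm m q.2‖ ^ p)
        (Set.Icc 0 1 ×ˢ Set.Icc 0 1) volume) ∧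
      IntegrableOn (fun q : ℝ × ℝ => ‖η q.1 - η q.2‖ ^ p)
        (Set.Icc 0 1 ×ˢ Set.Icc 0 1) volume ∧
      Tendsto (fun m => ∫ u in (0:ℝ)..1, ∫ v in (0:ℝ)..1, ‖ηm m u - ηm m v‖ ^ p)
        atTop (𝓝 (∫ u in (0:ℝ)..1, ∫ v in (0:ℝ)..1, ‖η u - η v‖ ^ p)) := by
  have hca : ∀ m u v, |u - v| ≤ δ → c * |u - v| ≤ ‖ηm m u - ηm m v‖ := fun m u v h => by
    simpa only [circDist_one_eq_abs (h.trans hδ.2)] using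
      hchordarc m u v ((circDist_one_eq_abs (h.trans hδ.2)).trans_le h)
  have hcaη : ∀ u v, |u - v| ≤ δ → c * |u - v| ≤ ‖η u - η v‖ := fun u v h =>
    ge_of_tendsto' ((hconv.tendsto_at u).sub (hconv.tendsto_at v)).norm fun m => hca m u v h
  have hint := fun m => integrableOn_unitSquare_norm_sub_rpow hp.1 hp.2.le hc hδ.1 (hηm m) (hca m)
  have hintη := integrableOn_unitSquare_norm_sub_rpow hp.1 hp.2.le hc hδ.1 hη hcaη
  refine ⟨hint, hintη, ?_⟩
  simp only [← setIntegral_Icc_prod_Icc_eq_intervalIntegral zero_le_one zero_le_one (hint _),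
    ← setIntegral_Icc_prod_Icc_eq_intervalIntegral zero_le_one zero_le_one hintη]
  have : IsFiniteMeasure (volume.restrict (Icc (0 : ℝ) 1 ×ˢ Icc (0 : ℝ) 1)) :=
    isFiniteMeasure_restrict.2 (by rw [Measure.volume_eq_prod, Measure.prod_prod]; simp)
  exact tendsto_integral_of_L1' _ hintη.1 (Eventually.of_forall hint)
    (tendsto_Lp_finite_of_tendsto_ae le_rfl ENNReal.one_ne_top (fun m => (hint m).1)
      (memLp_one_iff_integrable.2 hintη)
      (unifIntegrable_unitSquare_norm_sub_rpow hp hc hδ.1 hηm hca)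
      (ae_tendsto_norm_sub_rpow_of_injOn hconv.tendsto_at hinj p))

theorem negative_power_chord_integral_continuity
    (p : ℝ) (hp : p ∈ Set.Ioo (-1 : ℝ) 0)
    (η : ℝ → EuclideanSpace ℝ (Fin 3)) (ηm : ℕ → ℝ → EuclideanSpace ℝ (Fin 3))
    (hη : Continuous η) (hηm : ∀ m, Continuous (ηm m))
    (hperη : ∀ u, η (u + 1) = η u) (hperηm : ∀ m u, ηm m (u + 1) = ηm m u)
    (hconv : TendstoUniformly ηm η atTop)
    (hinj : Set.InjOn η (Set.Ico 0 1))
    (c δ : ℝ) (hc : 0 < c) (hδ : δ ∈ Set.Ioc (0:ℝ) (1/2))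
    (hchordarc : ∀ m, ∀ u v : ℝ, circDist 1 u v ≤ δ →
      c * circDist 1 u v ≤ ‖ηm m u - ηm m v‖) :
    (∀ m, IntegrableOn (fun q : ℝ × ℝ => ‖ηm m q.1 - ηm m q.2‖ ^ p)
        (Set.Icc 0 1 ×ˢ Set.Icc 0 1) volume) ∧
      IntegrableOn (fun q : ℝ × ℝ => ‖η q.1 - η q.2‖ ^ p)
        (Set.Icc 0 1 ×ˢ Set.Icc 0 1) volume ∧
      Tendsto (fun m => ∫ u in (0:ℝ)..1, ∫ v in (0:ℝ)..1, ‖ηm m u - ηm m v‖ ^ p)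
        atTop (𝓝 (∫ u in (0:ℝ)..1, ∫ v in (0:ℝ)..1, ‖η u - η v‖ ^ p)) :=
  negative_power_chord_integral_continuity_general p hp η ηm hη hηm hconv hinj c δ hc hδ hchordarc
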